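/- With the notation and assumptions of the Gaussian KL decomposition for product measures: D(Q ‖ Q*) ≤ (max_j Γ_{jj} / λ_min(Γ)) · [D(Q ‖ N(μ, Γ^{-1})) - D(Q* ‖ N(μ, Γ^{-1}))], where Q* = N(μ, (diag Γ)^{-1}). In particular, Q* minimizes D(Q ‖ N(μ, Γ^{-1})) over all product measures Q = ⨂_j Q_j. -/

import Mathlib

open MeasureTheory Matrix

/-- Density of the one-dimensional normal distribution `N(m, s2)`. -/
noncomputable def gaussPDF (m s2 x : ℝ) : ℝ :=
  Real.exp (-(x - m) ^ 2 / (2 * s2)) / Real.sqrt (2 * Real.pi * s2)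

/-- Density of the multivariate normal `N(μ, Γ⁻¹)` with precision matrix `Γ`. -/
noncomputable def mvGaussPDF {d : ℕ} (μ : Fin d → ℝ) (Γ : Matrix (Fin d) (Fin d) ℝ)
    (θ : Fin d → ℝ) : ℝ :=
  Real.sqrt (Γ.det / (2 * Real.pi) ^ d) *
    Real.exp (-(1 / 2) * ((θ - μ) ⬝ᵥ Γ.mulVec (θ - μ)))

open Real ProbabilityTheory Finset

/-!
Write `Q = ⨂ qⱼ`, `Q* = ⨂ N(μⱼ, Γⱼⱼ⁻¹)`, `P = N(μ, Γ⁻¹)` and `m = E_Q[θ] - μ`. Up to a constant,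
`log (Q*/P)` is the off-diagonal part `½ ∑_{i ≠ j} Γᵢⱼ (θᵢ - μᵢ)(θⱼ - μⱼ)` of the Gaussian
exponent, and under a product measure off-diagonal products integrate to products of means. Hence
`D(Q‖P) = D(Q‖Q*) + D(Q*‖P) + ½ (mᵀΓm - ∑ⱼ Γⱼⱼ mⱼ²)`. Gibbs' inequality in each coordinate gives
`D(Q‖Q*) = ∑ⱼ D(qⱼ‖N(μⱼ, Γⱼⱼ⁻¹)) ≥ ½ ∑ⱼ Γⱼⱼ mⱼ²`, and the bounds
`λ_min |m|² ≤ mᵀΓm` and `∑ⱼ Γⱼⱼ mⱼ² ≤ (maxⱼ Γⱼⱼ) |m|²` turn this identity into both claims.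
-/

section GaussPDF

variable {m s2 : ℝ}

lemma gaussPDF_eq_gaussianPDFReal (hs2 : 0 ≤ s2) :
    gaussPDF m s2 = gaussianPDFReal m s2.toNNReal := by
  ext x
  rw [gaussPDF, gaussianPDFReal_def, Real.coe_toNNReal _ hs2, div_eq_inv_mul]

lemma gaussPDF_pos (hs2 : 0 < s2) (x : ℝ) : 0 < gaussPDF m s2 x := by
  unfold gaussPDF
  positivity

lemma integrable_gaussPDF (hs2 : 0 ≤ s2) : Integrable (gaussPDF m s2) := by
  rw [gaussPDF_eq_gaussianPDFReal hs2]
  exact integrable_gaussianPDFReal _ _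

lemma integral_gaussPDF (hs2 : 0 < s2) : ∫ x, gaussPDF m s2 x = 1 := by
  rw [gaussPDF_eq_gaussianPDFReal hs2.le]
  exact integral_gaussianPDFReal_eq_one m (Real.toNNReal_pos.2 hs2).ne'

lemma integrable_mul_gaussPDF (hs2 : 0 < s2) : Integrable (fun x => x * gaussPDF m s2 x) := by
  have h := (memLp_id_gaussianReal (μ := m) (v := s2.toNNReal) 1).integrable le_rfl
  rw [gaussianReal_of_var_ne_zero _ (Real.toNNReal_pos.2 hs2).ne',
    integrable_withDensity_iff_integrable_smul' (measurable_gaussianPDF _ _)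
      (ae_of_all _ fun _ => gaussianPDF_lt_top)] at h
  refine h.congr (ae_of_all _ fun x => ?_)
  simp [gaussianPDF, gaussPDF_eq_gaussianPDFReal hs2.le, mul_comm, gaussianPDFReal_nonneg]

lemma integral_mul_gaussPDF (hs2 : 0 < s2) : ∫ x, x * gaussPDF m s2 x = m := by
  have h := integral_id_gaussianReal (μ := m) (v := s2.toNNReal)
  rw [integral_gaussianReal_eq_integral_smul (Real.toNNReal_pos.2 hs2).ne'] at h
  simpa [gaussPDF_eq_gaussianPDFReal hs2.le, mul_comm] using h

lemma log_gaussPDF (hs2 : 0 < s2) (x : ℝ) :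
    log (gaussPDF m s2 x) = -(x - m) ^ 2 / (2 * s2) - log (√(2 * π * s2)) := by
  rw [gaussPDF, log_div (exp_ne_zero _) (sqrt_ne_zero'.2 (by positivity)), log_exp]

end GaussPDF

lemma sub_le_mul_log_div {a b : ℝ} (ha : 0 ≤ a) (hb : 0 < b) : a - b ≤ a * log (a / b) := by
  rcases ha.eq_or_lt with rfl | ha
  · simpa using hb.le
  · have h := mul_le_mul_of_nonneg_left (one_sub_inv_le_log_of_pos (div_pos ha hb)) ha.le
    rwa [inv_div, mul_sub, mul_one, mul_div_cancel₀ _ ha.ne'] at h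

lemma integral_sub_integral_le_integral_mul_log_div {α : Type*} [MeasurableSpace α]
    {μ : Measure α} {q r : α → ℝ} (hq0 : ∀ x, 0 ≤ q x) (hr : ∀ x, 0 < r x)
    (hq : Integrable q μ) (hri : Integrable r μ)
    (hqr : Integrable (fun x => q x * log (q x / r x)) μ) :
    ∫ x, q x ∂μ - ∫ x, r x ∂μ ≤ ∫ x, q x * log (q x / r x) ∂μ := by
  rw [← integral_sub hq hri]
  exact integral_mono (hq.sub hri) hqr fun x => sub_le_mul_log_div (hq0 x) (hr x)

lemma mul_log_div_eq_mul_log_div_add_mul_log_div {a b c : ℝ} (ha : 0 ≤ a) (hb : 0 < b)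
    (hc : 0 < c) : a * log (a / c) = a * log (a / b) + a * log (b / c) := by
  rcases ha.eq_or_lt with rfl | ha
  · simp
  · rw [log_div ha.ne' hc.ne', log_div ha.ne' hb.ne', log_div hb.ne' hc.ne']
    ring

section OneDimensional

variable {q : ℝ → ℝ} {s2 : ℝ}

lemma sub_sq_mul_eq (c x : ℝ) :
    (x - c) ^ 2 * q x = x ^ 2 * q x - 2 * c * (x * q x) + c ^ 2 * q x := by
  ring

lemma integrable_sub_sq_mul (hq : Integrable q) (hm1 : Integrable (fun x => x * q x))
    (hm2 : Integrable (fun x => x ^ 2 * q x)) (c : ℝ) :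
    Integrable (fun x => (x - c) ^ 2 * q x) := by
  simp_rw [sub_sq_mul_eq c]
  exact (hm2.sub (hm1.const_mul _)).add (hq.const_mul _)

lemma integral_sub_sq_mul (hq : Integrable q) (hq1 : ∫ x, q x = 1)
    (hm1 : Integrable (fun x => x * q x)) (hm2 : Integrable (fun x => x ^ 2 * q x)) (c : ℝ) :
    ∫ x, (x - c) ^ 2 * q x = (∫ x, x ^ 2 * q x) - 2 * c * (∫ x, x * q x) + c ^ 2 := by
  simp_rw [sub_sq_mul_eq c]
  rw [integral_add _ (hq.const_mul _), integral_sub hm2 (hm1.const_mul _), integral_const_mul,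
    integral_const_mul, hq1, mul_one]
  exact hm2.sub (hm1.const_mul _)

lemma integrable_sub_mul (hq : Integrable q) (hm1 : Integrable (fun x => x * q x))
    (c : ℝ) : Integrable (fun x => (x - c) * q x) := by
  simp_rw [sub_mul]
  exact hm1.sub (hq.const_mul c)

lemma integral_sub_mul (hq : Integrable q) (hq1 : ∫ x, q x = 1)
    (hm1 : Integrable (fun x => x * q x)) (c : ℝ) :
    ∫ x, (x - c) * q x = (∫ x, x * q x) - c := by
  simp_rw [sub_mul]
  rw [integral_sub hm1 (hq.const_mul c), integral_const_mul, hq1, mul_one]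

lemma mul_log_div_gaussPDF (hs2 : 0 < s2) {a : ℝ} (ha : 0 ≤ a) (c x : ℝ) :
    a * log (a / gaussPDF c s2 x)
      = a * log a + (x - c) ^ 2 * a / (2 * s2) + log (√(2 * π * s2)) * a := by
  rcases ha.eq_or_lt with rfl | ha
  · simp
  · rw [log_div ha.ne' (gaussPDF_pos hs2 x).ne', log_gaussPDF hs2]
    ring

variable (hq0 : ∀ x, 0 ≤ q x) (hq : Integrable q) (hm1 : Integrable (fun x => x * q x))
  (hm2 : Integrable (fun x => x ^ 2 * q x)) (hent : Integrable (fun x => q x * log (q x)))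
include hq0 hq hm1 hm2 hent

lemma integrable_mul_log_div_gaussPDF (hs2 : 0 < s2) (c : ℝ) :
    Integrable (fun x => q x * log (q x / gaussPDF c s2 x)) := by
  simp_rw [mul_log_div_gaussPDF hs2 (hq0 _)]
  exact (hent.add ((integrable_sub_sq_mul hq hm1 hm2 c).div_const _)).add (hq.const_mul _)

lemma integral_mul_log_div_gaussPDF (hs2 : 0 < s2) (hq1 : ∫ x, q x = 1) (c : ℝ) :
    ∫ x, q x * log (q x / gaussPDF c s2 x)
      = (∫ x, q x * log (q x))
        + ((∫ x, x ^ 2 * q x) - 2 * c * (∫ x, x * q x) + c ^ 2) / (2 * s2)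
        + log (√(2 * π * s2)) := by
  have hsq := integrable_sub_sq_mul hq hm1 hm2 c
  simp_rw [mul_log_div_gaussPDF hs2 (hq0 _)]
  rw [integral_add _ (hq.const_mul _), integral_add hent (hsq.div_const _), integral_div,
    integral_const_mul, hq1, mul_one, integral_sub_sq_mul hq hq1 hm1 hm2]
  exact hent.add (hsq.div_const _)

/-- Gibbs' inequality against `N(∫ x q, s2)`, plus the bias-variance split of the second
moment about `c`. -/
lemma sq_integral_sub_div_le_integral_mul_log_div_gaussPDF (hs2 : 0 < s2)
    (hq1 : ∫ x, q x = 1) (c : ℝ) :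
    ((∫ x, x * q x) - c) ^ 2 / (2 * s2) ≤ ∫ x, q x * log (q x / gaussPDF c s2 x) := by
  have hGibbs := integral_sub_integral_le_integral_mul_log_div hq0 (gaussPDF_pos hs2) hq
    (integrable_gaussPDF hs2.le)
    (integrable_mul_log_div_gaussPDF hq0 hq hm1 hm2 hent hs2 (∫ x, x * q x))
  rw [hq1, integral_gaussPDF hs2, sub_self,
    integral_mul_log_div_gaussPDF hq0 hq hm1 hm2 hent hs2 hq1] at hGibbs
  rw [integral_mul_log_div_gaussPDF hq0 hq hm1 hm2 hent hs2 hq1]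
  have h : ((∫ x, x * q x) - c) ^ 2 / (2 * s2)
      = ((∫ x, x ^ 2 * q x) - 2 * c * (∫ x, x * q x) + c ^ 2) / (2 * s2)
        - ((∫ x, x ^ 2 * q x) - 2 * (∫ x, x * q x) * (∫ x, x * q x) + (∫ x, x * q x) ^ 2)
          / (2 * s2) := by
    ring
  linarith

end OneDimensional

section ProductDensity

variable {ι : Type*} [Fintype ι] {p : ι → ℝ → ℝ}

lemma prod_mul_prod_eq_prod_ite [DecidableEq ι] (s : Finset ι) (w : ι → ℝ → ℝ) (θ : ι → ℝ) :
    (∏ k ∈ s, w k (θ k)) * ∏ k, p k (θ k)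
      = ∏ k, (if k ∈ s then w k (θ k) else 1) * p k (θ k) := by
  rw [prod_mul_distrib, prod_ite_mem_eq]

lemma integrable_prod_mul_prod (s : Finset ι) (w : ι → ℝ → ℝ) (hp : ∀ k, Integrable (p k))
    (hw : ∀ k ∈ s, Integrable (fun x => w k x * p k x)) :
    Integrable (fun θ : ι → ℝ => (∏ k ∈ s, w k (θ k)) * ∏ k, p k (θ k)) := by
  classical
  simp_rw [prod_mul_prod_eq_prod_ite]
  refine Integrable.fintype_prod (f := fun k x => (if k ∈ s then w k x else 1) * p k x)
    fun k => ?_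
  by_cases hk : k ∈ s <;> simp [hk, hw, hp]

lemma integral_prod_mul_prod (s : Finset ι) (w : ι → ℝ → ℝ) (hp1 : ∀ k, ∫ x, p k x = 1) :
    ∫ θ : ι → ℝ, (∏ k ∈ s, w k (θ k)) * ∏ k, p k (θ k) = ∏ k ∈ s, ∫ x, w k x * p k x := by
  classical
  simp_rw [prod_mul_prod_eq_prod_ite]
  rw [integral_fintype_prod_volume_eq_prod (fun k x => (if k ∈ s then w k x else 1) * p k x),
    ← prod_ite_mem_eq s]
  refine prod_congr rfl fun k _ => ?_
  by_cases hk : k ∈ s <;> simp [hk, hp1]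

lemma prod_mul_log_prod_div_prod {r : ι → ℝ → ℝ} (hp0 : ∀ k x, 0 ≤ p k x)
    (hr : ∀ k x, 0 < r k x) (θ : ι → ℝ) :
    (∏ k, p k (θ k)) * log ((∏ k, p k (θ k)) / ∏ k, r k (θ k))
      = ∑ j, (∏ k ∈ {j}, log (p k (θ k) / r k (θ k))) * ∏ k, p k (θ k) := by
  simp_rw [prod_singleton, ← sum_mul, mul_comm (∏ k, p k (θ k))]
  rcases (prod_nonneg fun k _ => hp0 k (θ k)).eq_or_lt with h | h
  · rw [← h, mul_zero, mul_zero]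
  · have hpk : ∀ k, p k (θ k) ≠ 0 := fun k hk => h.ne' (prod_eq_zero (mem_univ k) hk)
    rw [← prod_div_distrib, log_prod fun k _ => div_ne_zero (hpk k) (hr k (θ k)).ne']

lemma integrable_prod_mul_log_prod_div_prod {r : ι → ℝ → ℝ} (hp0 : ∀ k x, 0 ≤ p k x)
    (hr : ∀ k x, 0 < r k x) (hp : ∀ k, Integrable (p k))
    (hpr : ∀ k, Integrable (fun x => p k x * log (p k x / r k x))) :
    Integrable (fun θ : ι → ℝ =>
      (∏ k, p k (θ k)) * log ((∏ k, p k (θ k)) / ∏ k, r k (θ k))) := by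
  simp_rw [prod_mul_log_prod_div_prod hp0 hr]
  refine integrable_finsetSum _ fun j _ =>
    integrable_prod_mul_prod {j} (fun k x => log (p k x / r k x)) hp fun k _ => ?_
  simpa only [mul_comm] using hpr k

lemma integral_prod_mul_log_prod_div_prod {r : ι → ℝ → ℝ} (hp0 : ∀ k x, 0 ≤ p k x)
    (hr : ∀ k x, 0 < r k x) (hp : ∀ k, Integrable (p k)) (hp1 : ∀ k, ∫ x, p k x = 1)
    (hpr : ∀ k, Integrable (fun x => p k x * log (p k x / r k x))) :
    ∫ θ : ι → ℝ, (∏ k, p k (θ k)) * log ((∏ k, p k (θ k)) / ∏ k, r k (θ k))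
      = ∑ k, ∫ x, p k x * log (p k x / r k x) := by
  simp_rw [prod_mul_log_prod_div_prod hp0 hr]
  rw [integral_finsetSum _ fun j _ =>
    integrable_prod_mul_prod {j} (fun k x => log (p k x / r k x)) hp fun k _ => ?_]
  · refine sum_congr rfl fun j _ => ?_
    rw [integral_prod_mul_prod {j} (fun k x => log (p k x / r k x)) hp1, prod_singleton]
    simp_rw [mul_comm]
  · simpa only [mul_comm] using hpr k

end ProductDensity

lemma dotProduct_mulVec_eq_sum_diag_add_sum_offDiag {n : Type*} [Fintype n] [DecidableEq n]
    (Γ : Matrix n n ℝ) (v : n → ℝ) :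
    v ⬝ᵥ Γ *ᵥ v = ∑ i, Γ i i * (v i * v i) + ∑ i, ∑ j ∈ univ.erase i, Γ i j * (v i * v j) := by
  simp only [dotProduct, mulVec, mul_sum, ← sum_add_distrib]
  refine sum_congr rfl fun i _ => ?_
  rw [← add_sum_erase _ _ (mem_univ i)]
  congr 1
  · ring
  · exact sum_congr rfl fun j _ => by ring

lemma Matrix.PosDef.exists_pos_mul_dotProduct_self_le {n : Type*} [Fintype n]
    {Γ : Matrix n n ℝ} (hΓ : Γ.PosDef) :
    ∃ c, 0 < c ∧ ∀ v : n → ℝ, c * (v ⬝ᵥ v) ≤ v ⬝ᵥ Γ *ᵥ v := by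
  rcases isEmpty_or_nonempty n with hn | hn
  · exact ⟨1, one_pos, fun v => by simp [Subsingleton.elim v 0]⟩
  obtain ⟨u, hu, hmin⟩ := (isCompact_sphere (0 : n → ℝ) 1).exists_isMinOn
    (NormedSpace.sphere_nonempty.2 zero_le_one)
    (by fun_prop : Continuous fun v : n → ℝ => v ⬝ᵥ Γ *ᵥ v).continuousOn
  have hu0 : 0 < u ⬝ᵥ Γ *ᵥ u := by
    simpa using hΓ.dotProduct_mulVec_pos (ne_zero_of_mem_sphere one_ne_zero ⟨u, hu⟩)
  refine ⟨u ⬝ᵥ Γ *ᵥ u / Fintype.card n, by positivity, fun v => ?_⟩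
  rcases eq_or_ne v 0 with rfl | hv
  · simp
  have hnv : 0 < ‖v‖ := norm_pos_iff.2 hv
  have hscaled : u ⬝ᵥ Γ *ᵥ u ≤ ‖v‖⁻¹ ^ 2 * (v ⬝ᵥ Γ *ᵥ v) := by
    have h := hmin (show ‖v‖⁻¹ • v ∈ Metric.sphere (0 : n → ℝ) 1 by
      simp [norm_smul, hnv.ne'])
    simpa [mulVec_smul, smul_dotProduct, dotProduct_smul, sq, mul_assoc] using h
  have hdot : v ⬝ᵥ v ≤ Fintype.card n * ‖v‖ ^ 2 := by
    rw [← nsmul_eq_mul, ← card_univ, ← sum_const, dotProduct]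
    refine sum_le_sum fun i _ => ?_
    rw [← sq, ← sq_abs]
    exact pow_le_pow_left₀ (abs_nonneg _) (norm_le_pi_norm v i) 2
  calc u ⬝ᵥ Γ *ᵥ u / Fintype.card n * (v ⬝ᵥ v)
      ≤ u ⬝ᵥ Γ *ᵥ u / Fintype.card n * (Fintype.card n * ‖v‖ ^ 2) := by gcongr
    _ = u ⬝ᵥ Γ *ᵥ u * ‖v‖ ^ 2 := by field_simp
    _ ≤ v ⬝ᵥ Γ *ᵥ v := by
      rw [inv_pow] at hscaled
      rwa [← le_div_iff₀ (by positivity), div_eq_inv_mul]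

section MeanField

variable {d : ℕ} {μ : Fin d → ℝ} {Γ : Matrix (Fin d) (Fin d) ℝ}

lemma mvGaussPDF_pos (hdet : 0 < Γ.det) (θ : Fin d → ℝ) : 0 < mvGaussPDF μ Γ θ := by
  unfold mvGaussPDF
  positivity

lemma log_prod_gaussPDF_div_mvGaussPDF (hΓ : ∀ j, 0 < Γ j j) (hdet : 0 < Γ.det)
    (θ : Fin d → ℝ) :
    log ((∏ j, gaussPDF (μ j) (Γ j j)⁻¹ (θ j)) / mvGaussPDF μ Γ θ)
      = log ((∏ j, gaussPDF (μ j) (Γ j j)⁻¹ (μ j)) / mvGaussPDF μ Γ μ)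
        + (∑ i, ∑ j ∈ univ.erase i, Γ i j * ((θ i - μ i) * (θ j - μ j))) / 2 := by
  have key : ∀ θ : Fin d → ℝ,
      log ((∏ j, gaussPDF (μ j) (Γ j j)⁻¹ (θ j)) / mvGaussPDF μ Γ θ)
        = -(∑ j, log (√(2 * π * (Γ j j)⁻¹))) - log (√(Γ.det / (2 * π) ^ d))
          + (∑ i, ∑ j ∈ univ.erase i, Γ i j * ((θ i - μ i) * (θ j - μ j))) / 2 := by
    intro θ
    have hg : ∀ j, 0 < gaussPDF (μ j) (Γ j j)⁻¹ (θ j) := fun j => gaussPDF_pos (inv_pos.2 (hΓ j)) _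
    rw [log_div (prod_pos fun j _ => hg j).ne' (mvGaussPDF_pos hdet θ).ne',
      log_prod fun j _ => (hg j).ne', mvGaussPDF,
      log_mul (sqrt_ne_zero'.2 (by positivity)) (exp_ne_zero _), log_exp,
      dotProduct_mulVec_eq_sum_diag_add_sum_offDiag]
    have hlog : ∀ j, log (gaussPDF (μ j) (Γ j j)⁻¹ (θ j))
        = -(Γ j j * ((θ j - μ j) * (θ j - μ j))) / 2 - log (√(2 * π * (Γ j j)⁻¹)) := by
      intro j
      rw [log_gaussPDF (inv_pos.2 (hΓ j))]
      field_simp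
    simp_rw [hlog, Pi.sub_apply, sum_sub_distrib, ← sum_div, sum_neg_distrib]
    ring
  rw [key θ, key μ]
  simp

lemma prod_mul_log_prod_gaussPDF_div_mvGaussPDF (hΓ : ∀ j, 0 < Γ j j) (hdet : 0 < Γ.det)
    (p : Fin d → ℝ → ℝ) (θ : Fin d → ℝ) :
    (∏ k, p k (θ k)) * log ((∏ j, gaussPDF (μ j) (Γ j j)⁻¹ (θ j)) / mvGaussPDF μ Γ θ)
      = log ((∏ j, gaussPDF (μ j) (Γ j j)⁻¹ (μ j)) / mvGaussPDF μ Γ μ) * ∏ k, p k (θ k)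
        + (∑ i, ∑ j ∈ univ.erase i,
            Γ i j * ((∏ k ∈ {i, j}, (θ k - μ k)) * ∏ k, p k (θ k))) / 2 := by
  rw [log_prod_gaussPDF_div_mvGaussPDF hΓ hdet, mul_add, mul_comm, mul_div_assoc', mul_sum]
  congr 2
  refine sum_congr rfl fun i _ => ?_
  rw [mul_sum]
  refine sum_congr rfl fun j hj => ?_
  rw [prod_pair (ne_of_mem_erase hj).symm]
  ring

lemma integrable_prod_mul_log_prod_gaussPDF_div_mvGaussPDF (hΓ : ∀ j, 0 < Γ j j)
    (hdet : 0 < Γ.det) {p : Fin d → ℝ → ℝ} (hp : ∀ k, Integrable (p k))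
    (hm1 : ∀ k, Integrable (fun x => x * p k x)) :
    Integrable (fun θ : Fin d → ℝ =>
      (∏ k, p k (θ k)) * log ((∏ j, gaussPDF (μ j) (Γ j j)⁻¹ (θ j)) / mvGaussPDF μ Γ θ)) := by
  simp_rw [prod_mul_log_prod_gaussPDF_div_mvGaussPDF hΓ hdet p]
  refine ((Integrable.fintype_prod hp).const_mul _).add (Integrable.div_const ?_ _)
  refine integrable_finsetSum _ fun i _ => integrable_finsetSum _ fun j _ => ?_
  exact (integrable_prod_mul_prod {i, j} (fun k x => x - μ k) hp fun k _ =>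
    integrable_sub_mul (hp k) (hm1 k) (μ k)).const_mul _

lemma integral_prod_mul_log_prod_gaussPDF_div_mvGaussPDF (hΓ : ∀ j, 0 < Γ j j)
    (hdet : 0 < Γ.det) {p : Fin d → ℝ → ℝ} (hp : ∀ k, Integrable (p k))
    (hp1 : ∀ k, ∫ x, p k x = 1) (hm1 : ∀ k, Integrable (fun x => x * p k x)) :
    ∫ θ : Fin d → ℝ,
        (∏ k, p k (θ k)) * log ((∏ j, gaussPDF (μ j) (Γ j j)⁻¹ (θ j)) / mvGaussPDF μ Γ θ)
      = log ((∏ j, gaussPDF (μ j) (Γ j j)⁻¹ (μ j)) / mvGaussPDF μ Γ μ)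
        + ((fun k => (∫ x, x * p k x) - μ k) ⬝ᵥ Γ *ᵥ (fun k => (∫ x, x * p k x) - μ k)
          - ∑ i, Γ i i * (((∫ x, x * p i x) - μ i) * ((∫ x, x * p i x) - μ i))) / 2 := by
  have hprod : Integrable (fun θ : Fin d → ℝ => ∏ k, p k (θ k)) := Integrable.fintype_prod hp
  have hpair : ∀ i j, Integrable (fun θ : Fin d → ℝ =>
      (∏ k ∈ {i, j}, (θ k - μ k)) * ∏ k, p k (θ k)) := fun i j =>
    integrable_prod_mul_prod {i, j} (fun k x => x - μ k) hp fun k _ =>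
      integrable_sub_mul (hp k) (hm1 k) (μ k)
  have hoffDiag : ∀ i, Integrable (fun θ : Fin d → ℝ => ∑ j ∈ univ.erase i,
      Γ i j * ((∏ k ∈ {i, j}, (θ k - μ k)) * ∏ k, p k (θ k))) := fun i =>
    integrable_finsetSum _ fun j _ => (hpair i j).const_mul _
  have hoffDiagIntegral : ∫ θ : Fin d → ℝ, ∑ i, ∑ j ∈ univ.erase i,
        Γ i j * ((∏ k ∈ {i, j}, (θ k - μ k)) * ∏ k, p k (θ k))
      = ∑ i, ∑ j ∈ univ.erase i,
        Γ i j * (((∫ x, x * p i x) - μ i) * ((∫ x, x * p j x) - μ j)) := by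
    rw [integral_finsetSum _ fun i _ => hoffDiag i]
    refine sum_congr rfl fun i _ => ?_
    rw [integral_finsetSum _ fun j _ => (hpair i j).const_mul _]
    refine sum_congr rfl fun j hj => ?_
    rw [integral_const_mul, integral_prod_mul_prod {i, j} (fun k x => x - μ k) hp1,
      prod_pair (ne_of_mem_erase hj).symm, integral_sub_mul (hp i) (hp1 i) (hm1 i),
      integral_sub_mul (hp j) (hp1 j) (hm1 j)]
  have hone : ∫ θ : Fin d → ℝ, ∏ k, p k (θ k) = 1 := by
    simp [integral_fintype_prod_volume_eq_prod, hp1]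
  simp_rw [prod_mul_log_prod_gaussPDF_div_mvGaussPDF hΓ hdet p]
  rw [integral_add (hprod.const_mul _) ((integrable_finsetSum _ fun i _ => hoffDiag i).div_const _),
    integral_const_mul, integral_div, hoffDiagIntegral, hone, mul_one,
    dotProduct_mulVec_eq_sum_diag_add_sum_offDiag]
  ring

lemma integral_prod_mul_log_prod_div_mvGaussPDF (hΓ : ∀ j, 0 < Γ j j) (hdet : 0 < Γ.det)
    {p : Fin d → ℝ → ℝ} (hp0 : ∀ k x, 0 ≤ p k x) (hp : ∀ k, Integrable (p k))
    (hp1 : ∀ k, ∫ x, p k x = 1) (hm1 : ∀ k, Integrable (fun x => x * p k x))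
    (hKL : ∀ k, Integrable (fun x => p k x * log (p k x / gaussPDF (μ k) (Γ k k)⁻¹ x))) :
    ∫ θ : Fin d → ℝ, (∏ k, p k (θ k)) * log ((∏ k, p k (θ k)) / mvGaussPDF μ Γ θ)
      = (∑ k, ∫ x, p k x * log (p k x / gaussPDF (μ k) (Γ k k)⁻¹ x))
        + (log ((∏ j, gaussPDF (μ j) (Γ j j)⁻¹ (μ j)) / mvGaussPDF μ Γ μ)
          + ((fun k => (∫ x, x * p k x) - μ k) ⬝ᵥ Γ *ᵥ (fun k => (∫ x, x * p k x) - μ k)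
            - ∑ i, Γ i i * (((∫ x, x * p i x) - μ i) * ((∫ x, x * p i x) - μ i))) / 2) := by
  have hg : ∀ k x, 0 < gaussPDF (μ k) (Γ k k)⁻¹ x := fun k => gaussPDF_pos (inv_pos.2 (hΓ k))
  rw [← integral_prod_mul_log_prod_div_prod hp0 hg hp hp1 hKL,
    ← integral_prod_mul_log_prod_gaussPDF_div_mvGaussPDF hΓ hdet hp hp1 hm1,
    ← integral_add (integrable_prod_mul_log_prod_div_prod hp0 hg hp hKL)
      (integrable_prod_mul_log_prod_gaussPDF_div_mvGaussPDF hΓ hdet hp hm1)]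
  exact integral_congr_ae (ae_of_all _ fun θ => mul_log_div_eq_mul_log_div_add_mul_log_div
    (prod_nonneg fun k _ => hp0 k (θ k)) (prod_pos fun k _ => hg k (θ k)) (mvGaussPDF_pos hdet θ))

lemma integral_prod_gaussPDF_mul_log_div_mvGaussPDF (hΓ : ∀ j, 0 < Γ j j) (hdet : 0 < Γ.det) :
    ∫ θ : Fin d → ℝ, (∏ j, gaussPDF (μ j) (Γ j j)⁻¹ (θ j)) *
        log ((∏ j, gaussPDF (μ j) (Γ j j)⁻¹ (θ j)) / mvGaussPDF μ Γ θ)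
      = log ((∏ j, gaussPDF (μ j) (Γ j j)⁻¹ (μ j)) / mvGaussPDF μ Γ μ) := by
  have hvar : ∀ j, 0 < (Γ j j)⁻¹ := fun j => inv_pos.2 (hΓ j)
  have hg : ∀ j x, 0 < gaussPDF (μ j) (Γ j j)⁻¹ x := fun j => gaussPDF_pos (hvar j)
  rw [integral_prod_mul_log_prod_div_mvGaussPDF hΓ hdet (fun j x => (hg j x).le)
    (fun j => integrable_gaussPDF (hvar j).le) (fun j => integral_gaussPDF (hvar j))
    (fun j => integrable_mul_gaussPDF (hvar j)) (fun j => by simp [div_self (hg j _).ne'])]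
  simp only [div_self (hg _ _).ne', log_one, mul_zero, integral_zero', sum_const_zero,
    integral_mul_gaussPDF (hvar _), sub_self, ← Pi.zero_def, zero_dotProduct, zero_div, add_zero,
    zero_add]

lemma sum_diag_mul_sq_div_two_le_sum_integral_mul_log_div_gaussPDF (hΓ : ∀ j, 0 < Γ j j)
    {q : Fin d → ℝ → ℝ} (hq0 : ∀ j x, 0 ≤ q j x) (hq : ∀ j, Integrable (q j))
    (hq1 : ∀ j, ∫ x, q j x = 1) (hm1 : ∀ j, Integrable (fun x => x * q j x))
    (hm2 : ∀ j, Integrable (fun x => x ^ 2 * q j x))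
    (hent : ∀ j, Integrable (fun x => q j x * log (q j x))) :
    (∑ j, Γ j j * (((∫ x, x * q j x) - μ j) * ((∫ x, x * q j x) - μ j))) / 2
      ≤ ∑ j, ∫ x, q j x * log (q j x / gaussPDF (μ j) (Γ j j)⁻¹ x) := by
  rw [sum_div]
  refine sum_le_sum fun j _ => ?_
  calc Γ j j * (((∫ x, x * q j x) - μ j) * ((∫ x, x * q j x) - μ j)) / 2
      = ((∫ x, x * q j x) - μ j) ^ 2 / (2 * (Γ j j)⁻¹) := by field_simp [(hΓ j).ne']
    _ ≤ _ := sq_integral_sub_div_le_integral_mul_log_div_gaussPDF (hq0 j) (hq j) (hm1 j) (hm2 j)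
      (hent j) (inv_pos.2 (hΓ j)) (hq1 j) (μ j)

end MeanField

lemma le_div_mul_add_sub_div_two {C S T N lam gam : ℝ} (hlam : 0 < lam) (hlamgam : lam ≤ gam)
    (hSC : S / 2 ≤ C) (hT : lam * N ≤ T) (hS : S ≤ gam * N) :
    C ≤ gam / lam * (C + (T - S) / 2) := by
  have hratio : 1 ≤ gam / lam := (one_le_div hlam).2 hlamgam
  have hscaled : gam * N ≤ gam / lam * T := by
    rw [div_mul_eq_mul_div, le_div_iff₀ hlam]
    nlinarith [mul_le_mul_of_nonneg_left hT (hlam.le.trans hlamgam)]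
  nlinarith [mul_nonneg (sub_nonneg.2 hratio) (sub_nonneg.2 hSC)]

theorem kl_product_gaussian_triangle_general {d : ℕ}
    (q : Fin d → ℝ → ℝ) (μ : Fin d → ℝ) (Γ : Matrix (Fin d) (Fin d) ℝ)
    (hΓ : Γ.PosDef)
    (lamMin : ℝ)
    (hlam : IsGreatest {c : ℝ | ∀ v : Fin d → ℝ, c * (v ⬝ᵥ v) ≤ v ⬝ᵥ Γ.mulVec v} lamMin)
    (gamMax : ℝ) (hgam : IsGreatest (Set.range fun j => Γ j j) gamMax)
    (hq0 : ∀ j x, 0 ≤ q j x)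
    (hq1 : ∀ j, ∫ x, q j x = 1)
    (hqm1 : ∀ j, Integrable (fun x => x * q j x))
    (hqm2 : ∀ j, Integrable (fun x => x ^ 2 * q j x))
    (hent : ∀ j, Integrable (fun x => q j x * Real.log (q j x))) :
    (∫ θ : Fin d → ℝ, (∏ j, q j (θ j)) *
        Real.log ((∏ j, q j (θ j)) / ∏ j, gaussPDF (μ j) (Γ j j)⁻¹ (θ j)))
      ≤ (gamMax / lamMin) *
        ((∫ θ : Fin d → ℝ, (∏ j, q j (θ j)) *
            Real.log ((∏ j, q j (θ j)) / mvGaussPDF μ Γ θ))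
          - ∫ θ : Fin d → ℝ, (∏ j, gaussPDF (μ j) (Γ j j)⁻¹ (θ j)) *
              Real.log ((∏ j, gaussPDF (μ j) (Γ j j)⁻¹ (θ j)) / mvGaussPDF μ Γ θ)) ∧
    (∫ θ : Fin d → ℝ, (∏ j, gaussPDF (μ j) (Γ j j)⁻¹ (θ j)) *
        Real.log ((∏ j, gaussPDF (μ j) (Γ j j)⁻¹ (θ j)) / mvGaussPDF μ Γ θ))
      ≤ ∫ θ : Fin d → ℝ, (∏ j, q j (θ j)) *
          Real.log ((∏ j, q j (θ j)) / mvGaussPDF μ Γ θ) := by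
  have hdiag : ∀ j, 0 < Γ j j := fun j => hΓ.diag_pos
  have hvar : ∀ j, 0 < (Γ j j)⁻¹ := fun j => inv_pos.2 (hdiag j)
  have hq : ∀ j, Integrable (q j) := fun j => .of_integral_ne_zero (by simp [hq1])
  have hKL : ∀ j, Integrable (fun x => q j x * log (q j x / gaussPDF (μ j) (Γ j j)⁻¹ x)) :=
    fun j => integrable_mul_log_div_gaussPDF (hq0 j) (hq j) (hqm1 j) (hqm2 j) (hent j) (hvar j) _
  have hCS := sum_diag_mul_sq_div_two_le_sum_integral_mul_log_div_gaussPDF hdiag hq0 hq hq1 hqm1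
    hqm2 hent (μ := μ)
  rw [integral_prod_mul_log_prod_div_mvGaussPDF hdiag hΓ.det_pos hq0 hq hq1 hqm1 hKL,
    integral_prod_gaussPDF_mul_log_div_mvGaussPDF hdiag hΓ.det_pos,
    integral_prod_mul_log_prod_div_prod hq0 (fun j => gaussPDF_pos (hvar j)) hq hq1 hKL]
  set m : Fin d → ℝ := fun k => (∫ x, x * q k x) - μ k
  simp only [show ∀ i, (∫ x, x * q i x) - μ i = m i from fun i => rfl] at hCS ⊢
  obtain ⟨c, hc, hcmem⟩ := hΓ.exists_pos_mul_dotProduct_self_le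
  have hlam0 : 0 < lamMin := hc.trans_le (hlam.2 hcmem)
  obtain ⟨j, rfl⟩ := hgam.1
  have hlamγ : lamMin ≤ Γ j j := by simpa using hlam.1 (Pi.single j 1)
  have hS : ∑ i, Γ i i * (m i * m i) ≤ Γ j j * (m ⬝ᵥ m) := by
    rw [dotProduct, mul_sum]
    exact sum_le_sum fun i _ => mul_le_mul_of_nonneg_right (hgam.2 ⟨i, rfl⟩) (mul_self_nonneg _)
  have hT0 : 0 ≤ m ⬝ᵥ Γ *ᵥ m := by simpa using hΓ.posSemidef.dotProduct_mulVec_nonneg m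
  constructor
  · linarith [le_div_mul_add_sub_div_two hlam0 hlamγ hCS (hlam.1 m) hS]
  · linarith

/-- Relaxed "triangle inequality" around the mean-field projection `Q* = N(μ, (diag Γ)⁻¹)`:
`D(Q‖Q*) ≤ (maxⱼ Γⱼⱼ / λ_min(Γ)) [D(Q‖N(μ,Γ⁻¹)) - D(Q*‖N(μ,Γ⁻¹))]`; in particular `Q*`
minimizes `D(·‖N(μ,Γ⁻¹))` over product measures. -/
theorem kl_product_gaussian_triangle {d : ℕ}
    (q : Fin d → ℝ → ℝ) (μ : Fin d → ℝ) (Γ : Matrix (Fin d) (Fin d) ℝ)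
    (hΓ : Γ.PosDef)
    (lamMin : ℝ)
    (hlam : IsGreatest {c : ℝ | ∀ v : Fin d → ℝ, c * (v ⬝ᵥ v) ≤ v ⬝ᵥ Γ.mulVec v} lamMin)
    (gamMax : ℝ) (hgam : IsGreatest (Set.range fun j => Γ j j) gamMax)
    (hqmeas : ∀ j, Measurable (q j))
    (hq0 : ∀ j x, 0 ≤ q j x)
    (hq1 : ∀ j, ∫ x, q j x = 1)
    (hqm1 : ∀ j, Integrable (fun x => x * q j x))
    (hqm2 : ∀ j, Integrable (fun x => x ^ 2 * q j x))
    (hent : ∀ j, Integrable (fun x => q j x * Real.log (q j x)))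
    (hKL1 : Integrable (fun θ : Fin d → ℝ =>
      (∏ j, q j (θ j)) * Real.log ((∏ j, q j (θ j)) / mvGaussPDF μ Γ θ)))
    (hKL2 : Integrable (fun θ : Fin d → ℝ =>
      (∏ j, gaussPDF (μ j) (Γ j j)⁻¹ (θ j)) *
        Real.log ((∏ j, gaussPDF (μ j) (Γ j j)⁻¹ (θ j)) / mvGaussPDF μ Γ θ)))
    (hKL3 : Integrable (fun θ : Fin d → ℝ =>
      (∏ j, q j (θ j)) *
        Real.log ((∏ j, q j (θ j)) / ∏ j, gaussPDF (μ j) (Γ j j)⁻¹ (θ j)))) :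
    (∫ θ : Fin d → ℝ, (∏ j, q j (θ j)) *
        Real.log ((∏ j, q j (θ j)) / ∏ j, gaussPDF (μ j) (Γ j j)⁻¹ (θ j)))
      ≤ (gamMax / lamMin) *
        ((∫ θ : Fin d → ℝ, (∏ j, q j (θ j)) *
            Real.log ((∏ j, q j (θ j)) / mvGaussPDF μ Γ θ))
          - ∫ θ : Fin d → ℝ, (∏ j, gaussPDF (μ j) (Γ j j)⁻¹ (θ j)) *
              Real.log ((∏ j, gaussPDF (μ j) (Γ j j)⁻¹ (θ j)) / mvGaussPDF μ Γ θ)) ∧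
    (∫ θ : Fin d → ℝ, (∏ j, gaussPDF (μ j) (Γ j j)⁻¹ (θ j)) *
        Real.log ((∏ j, gaussPDF (μ j) (Γ j j)⁻¹ (θ j)) / mvGaussPDF μ Γ θ))
      ≤ ∫ θ : Fin d → ℝ, (∏ j, q j (θ j)) *
          Real.log ((∏ j, q j (θ j)) / mvGaussPDF μ Γ θ) :=
  kl_product_gaussian_triangle_general q μ Γ hΓ lamMin hlam gamMax hgam hq0 hq1 hqm1 hqm2 hent
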